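/- (Functoriality of the sign action, Proposition 3.4.) Let g be a binary forest with m roots and n leaves, let f be a binary forest with n roots, and let σ be a sign list of length m. Then f(g(σ)) = (f∘g)(σ), where f∘g is the composite forest obtained by stacking f on top of g. -/

import Mathlib

/-- A planar rooted binary tree: a leaf, or a node with two subtrees. -/
inductive PTree : Type
  | leaf : PTree
  | node : PTree → PTree → PTree

/-- The number of leaves of a planar binary tree. -/
def PTree.leaves : PTree → ℕ
  | .leaf => 1
  | .node l r => l.leaves + r.leaves

/-- The sign list produced by a single tree acting on a single sign `s`:
a leaf just outputs `s`; a node (an elementary caret at the root) turns `s`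
into the pair `(s, ¬s)` and then lets the left subtree act on `s` and the
right subtree act on `¬s`. -/
def PTree.act : PTree → Bool → List Bool
  | .leaf, s => [s]
  | .node l r, s => l.act s ++ r.act (!s)

/-- The action of a binary forest (a list of trees, one per root) on a sign
list of the same length: the `i`-th tree acts on the `i`-th sign. -/
def forestAct : List PTree → List Bool → List Bool
  | t :: f, s :: σ => t.act s ++ forestAct f σ
  | _, _ => []

/-- Graft the trees of a forest `f` onto the leaves of a tree `t`, from left to
right; returns the grafted tree together with the unused remainder of `f`. -/
def PTree.graft : PTree → List PTree → PTree × List PTree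
  | .leaf, t :: f => (t, f)
  | .leaf, [] => (.leaf, [])
  | .node l r, f =>
      let (l', f') := l.graft f
      let (r', f'') := r.graft f'
      (.node l' r', f'')

/-- The composite forest `f ∘ g` obtained by stacking the forest `f` on top of
the forest `g`, i.e. grafting the `i`-th tree of `f` onto the `i`-th leaf
of `g`. -/
def forestComp (f g : List PTree) : List PTree :=
  match g with
  | [] => []
  | t :: g' =>
      let (t', f') := t.graft f
      t' :: forestComp f' g'

/-! Grafting commutes with acting: for a tree `t` with at most `f.length` leaves, the signs
`t.act s` are consumed by the first `t.leaves` trees of `f`, and acting with those on the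
leaves of `t` is the same as acting with `t` grafted with them (induction on `t`, one caret
at a time). Applying this root by root of `g` gives functoriality. -/

@[simp]
theorem forestAct_nil_right (f : List PTree) : forestAct f [] = [] := by
  cases f <;> rfl

theorem PTree.length_graft_snd (t : PTree) (f : List PTree) :
    (t.graft f).2.length = f.length - t.leaves := by
  induction t generalizing f with
  | leaf => cases f <;> simp [PTree.graft, PTree.leaves]
  | node l r ihl ihr =>
    simp only [PTree.graft, PTree.leaves, ihr, ihl, Nat.sub_sub]

theorem PTree.forestAct_act_append (t : PTree) (f : List PTree) (s : Bool) (τ : List Bool)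
    (h : t.leaves ≤ f.length) :
    forestAct f (t.act s ++ τ) = (t.graft f).1.act s ++ forestAct (t.graft f).2 τ := by
  induction t generalizing f s τ with
  | leaf =>
    obtain _ | ⟨a, f⟩ := f
    · simp [PTree.leaves] at h
    · rfl
  | node l r ihl ihr =>
    simp only [PTree.leaves] at h
    have hr : r.leaves ≤ (l.graft f).2.length := by
      rw [PTree.length_graft_snd]; omega
    simp only [PTree.act, PTree.graft, List.append_assoc]
    rw [ihl f s _ (by omega), ihr _ (!s) τ hr]

theorem forestAct_forestAct (g f : List PTree) (σ : List Bool)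
    (h : (g.map PTree.leaves).sum ≤ f.length) :
    forestAct f (forestAct g σ) = forestAct (forestComp f g) σ := by
  induction g generalizing f σ with
  | nil => simp [forestAct, forestComp]
  | cons t g ih =>
    obtain _ | ⟨s, σ⟩ := σ
    · simp
    · simp only [List.map_cons, List.sum_cons] at h
      have hrest : (g.map PTree.leaves).sum ≤ (t.graft f).2.length := by
        rw [PTree.length_graft_snd]; omega
      simp only [forestAct, forestComp]
      rw [t.forestAct_act_append f s _ (by omega), ih _ σ hrest]

theorem forestAct_comp_general (n : ℕ) (g f : List PTree) (σ : List Bool)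
    (hgl : (g.map PTree.leaves).sum = n)
    (hf : f.length = n) :
    forestAct f (forestAct g σ) = forestAct (forestComp f g) σ :=
  forestAct_forestAct g f σ (hgl.trans hf.symm).le

/-- Functoriality of the sign action: `f(g(σ)) = (f ∘ g)(σ)` whenever `g` has
`m` roots and `n` leaves, `f` has `n` roots, and `σ` has length `m`. -/
theorem forestAct_comp (m n : ℕ) (g f : List PTree) (σ : List Bool)
    (hg : g.length = m) (hgl : (g.map PTree.leaves).sum = n)
    (hf : f.length = n) (hσ : σ.length = m) :
    forestAct f (forestAct g σ) = forestAct (forestComp f g) σ :=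
  forestAct_comp_general n g f σ hgl hf
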